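/- Let the EPN-UCE loss for binary classification be ℓ(e, p) = ψ(e + 2) − ψ((e + 2)·p), where e ≥ 0 is the predicted total evidence and p ∈ (0,1) is the predicted probability of the ground-truth class, and ψ is the digamma function. Then ℓ(e, p) > −ln(p) for all e ≥ 0, and ℓ(e, p) → −ln(p) as e → ∞. -/

import Mathlib

/-- The digamma function `ψ(x) = d/dx log Γ(x)`. -/
noncomputable def digamma (x : ℝ) : ℝ := deriv (fun y => Real.log (Real.Gamma y)) x

open Real Set Filter Topology Finset

private lemma logGamma_diff {x : ℝ} (hx : 0 < x) :
    DifferentiableAt ℝ (fun y => Real.log (Real.Gamma y)) x := by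
  refine (Real.differentiableAt_Gamma ?_).log (Real.Gamma_ne_zero ?_) <;>
    exact fun m => ne_of_gt (by have : (0:ℝ) ≤ m := Nat.cast_nonneg m; linarith)

private lemma digamma_rec {x : ℝ} (hx : 0 < x) : digamma (x + 1) = digamma x + 1 / x := by
  unfold digamma
  rw [← deriv_comp_add_const, one_div, ← Real.deriv_log,
    ← deriv_add (logGamma_diff hx) (Real.differentiableAt_log hx.ne')]
  apply Filter.EventuallyEq.deriv_eq
  filter_upwards [eventually_gt_nhds hx] with y hy
  rw [Real.Gamma_add_one hy.ne', Real.log_mul hy.ne' (Real.Gamma_pos_of_pos hy).ne', add_comm]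
  rfl

private lemma digamma_le_log {x : ℝ} (hx : 0 < x) : digamma x ≤ Real.log x := by
  have h := Real.convexOn_log_Gamma.deriv_le_slope (mem_Ioi.mpr hx)
    (mem_Ioi.mpr (by linarith : (0:ℝ) < x + 1)) (by linarith) (logGamma_diff hx)
  rw [slope_def_field, show x + 1 - x = (1:ℝ) by ring, div_one] at h
  simp only [Function.comp_apply] at h
  rw [Real.Gamma_add_one hx.ne', Real.log_mul hx.ne' (Real.Gamma_pos_of_pos hx).ne'] at h
  have hd : digamma x = deriv (Real.log ∘ Real.Gamma) x := rfl
  rw [hd]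
  linarith

private lemma log_le_digamma {x : ℝ} (hx : 0 < x) : Real.log x ≤ digamma (x + 1) := by
  have h := Real.convexOn_log_Gamma.slope_le_deriv (mem_Ioi.mpr hx)
    (mem_Ioi.mpr (by linarith : (0:ℝ) < x + 1)) (by linarith) (logGamma_diff (by linarith))
  rw [slope_def_field, show x + 1 - x = (1:ℝ) by ring, div_one] at h
  simp only [Function.comp_apply] at h
  rw [Real.Gamma_add_one hx.ne', Real.log_mul hx.ne' (Real.Gamma_pos_of_pos hx).ne'] at h
  have hd : digamma (x + 1) = deriv (Real.log ∘ Real.Gamma) (x + 1) := rfl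
  rw [hd]
  linarith

private lemma digamma_add_nat {x : ℝ} (hx : 0 < x) (n : ℕ) :
    digamma (x + n) = digamma x + ∑ k ∈ Finset.range n, 1 / (x + k) := by
  induction n with
  | zero => simp
  | succ n ih =>
    have e1 : x + (n + 1 : ℕ) = (x + n) + 1 := by push_cast; ring
    rw [e1, digamma_rec (by have : (0:ℝ) ≤ n := Nat.cast_nonneg n; linarith), ih,
      Finset.sum_range_succ]
    ring

/-- auxiliary function -/
noncomputable def phiAux (t : ℝ) : ℝ := 1 / t - Real.log (t + 1) + Real.log t

private lemma phiAux_strictAnti : StrictAntiOn phiAux (Set.Ioi 0) := by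
  apply strictAntiOn_of_deriv_neg (convex_Ioi 0)
  · intro t ht
    have ht0 : (0:ℝ) < t := ht
    apply ContinuousAt.continuousWithinAt
    have hc1 : ContinuousAt (fun y : ℝ => Real.log (y + 1)) t :=
      (Real.continuousAt_log (by intro h; linarith)).comp
        (continuousAt_id.add continuousAt_const)
    exact ((continuousAt_const.div continuousAt_id ht0.ne').sub hc1).add
      (Real.continuousAt_log ht0.ne')
  · intro t ht
    rw [interior_Ioi] at ht
    have ht0 : (0:ℝ) < t := ht
    have h1 : HasDerivAt (fun t : ℝ => 1 / t) (-(t^2)⁻¹) t := by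
      simpa using (hasDerivAt_inv ht0.ne')
    have h2 : HasDerivAt (fun t : ℝ => Real.log (t + 1)) ((t+1)⁻¹) t := by
      have := (Real.hasDerivAt_log (by linarith : t + 1 ≠ 0)).comp t
        ((hasDerivAt_id t).add_const 1)
      simpa [Function.comp_def] using this
    have h3 : HasDerivAt Real.log t⁻¹ t := Real.hasDerivAt_log ht0.ne'
    have h : HasDerivAt phiAux (-(t^2)⁻¹ - (t+1)⁻¹ + t⁻¹) t := (h1.sub h2).add h3
    rw [h.deriv]
    have e1 : t⁻¹ - (t+1)⁻¹ = (t * (t+1))⁻¹ := by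
      field_simp
      ring
    have e2 : (t * (t+1))⁻¹ < (t^2)⁻¹ := by
      apply inv_strictAnti₀ (by positivity)
      nlinarith
    linarith

private lemma key_lower {a b : ℝ} (ha : 0 < a) (hab : a < b) :
    Real.log b - Real.log a + (phiAux a - phiAux b) ≤ digamma b - digamma a := by
  have hb : 0 < b := ha.trans hab
  set C : ℝ := Real.log b - Real.log a + (phiAux a - phiAux b) with hC
  have key : ∀ n : ℕ, C - 1 / (b + n) ≤ digamma b - digamma a := by
    intro n
    have hn0 : (0:ℝ) ≤ n := Nat.cast_nonneg n
    have tele : ∀ x : ℝ, 0 < x →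
        ∑ k ∈ Finset.range (n+1), (Real.log (x + k + 1) - Real.log (x + k))
          = Real.log (x + ((n+1:ℕ):ℝ)) - Real.log x := by
      intro x hx
      have h := Finset.sum_range_sub (fun k : ℕ => Real.log (x + k)) (n+1)
      rw [Nat.cast_zero, add_zero] at h
      rw [← h]
      refine Finset.sum_congr rfl fun k _ => ?_
      have e1 : x + (((k:ℝ))+1) = x + k + 1 := by ring
      rw [Nat.cast_add, Nat.cast_one, e1]
    have term : ∀ k : ℕ, (1:ℝ) / (a + k) - 1 / (b + k)
        = ((Real.log (a + k + 1) - Real.log (a + k)) - (Real.log (b + k + 1) - Real.log (b + k)))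
          + (phiAux (a + k) - phiAux (b + k)) := by
      intro k; unfold phiAux; ring
    have h0 : ∀ k ∈ Finset.range (n+1), (0:ℝ) ≤ phiAux (a + k) - phiAux (b + k) := by
      intro k _
      have hk : (0:ℝ) ≤ k := Nat.cast_nonneg k
      have := phiAux_strictAnti (mem_Ioi.mpr (by linarith : (0:ℝ) < a + k))
        (mem_Ioi.mpr (by linarith : (0:ℝ) < b + k)) (by linarith)
      linarith
    have hsum : phiAux a - phiAux b
        ≤ ∑ k ∈ Finset.range (n+1), (phiAux (a + k) - phiAux (b + k)) := by
      have h := Finset.single_le_sum h0 (Finset.mem_range.mpr (Nat.succ_pos n))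
      simpa using h
    have sum_eq : ∑ k ∈ Finset.range (n+1), ((1:ℝ) / (a + k) - 1 / (b + k))
        = ((Real.log (a + ((n+1:ℕ):ℝ)) - Real.log a)
            - (Real.log (b + ((n+1:ℕ):ℝ)) - Real.log b))
          + ∑ k ∈ Finset.range (n+1), (phiAux (a + k) - phiAux (b + k)) := by
      rw [← tele a ha, ← tele b hb, ← Finset.sum_sub_distrib, ← Finset.sum_add_distrib]
      exact Finset.sum_congr rfl fun k _ => term k
    have main : digamma b - digamma a
        = (digamma (b + ((n+1:ℕ):ℝ)) - digamma (a + ((n+1:ℕ):ℝ)))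
          + ∑ k ∈ Finset.range (n+1), ((1:ℝ)/(a + k) - 1/(b + k)) := by
      have ida := digamma_add_nat ha (n+1)
      have idb := digamma_add_nat hb (n+1)
      rw [Finset.sum_sub_distrib]
      linarith
    have hbm : Real.log (b + n) ≤ digamma (b + ((n+1:ℕ):ℝ)) := by
      have h := log_le_digamma (x := b + n) (by linarith)
      have e1 : b + ((n+1:ℕ):ℝ) = b + n + 1 := by push_cast; ring
      rw [e1]; exact h
    have ham : digamma (a + ((n+1:ℕ):ℝ)) ≤ Real.log (a + ((n+1:ℕ):ℝ)) :=
      digamma_le_log (by have : (0:ℝ) ≤ ((n+1:ℕ):ℝ) := Nat.cast_nonneg _; linarith)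
    have hlog : Real.log (b + ((n+1:ℕ):ℝ)) - Real.log (b + n) ≤ 1 / (b + n) := by
      have e1 : b + ((n+1:ℕ):ℝ) = (b + n) + 1 := by push_cast; ring
      have hpos : (0:ℝ) < b + n := by linarith
      rw [e1]
      calc Real.log ((b + n) + 1) - Real.log (b + n)
          = Real.log (((b + n) + 1) / (b + n)) := by
            rw [Real.log_div (by linarith) hpos.ne']
        _ ≤ ((b + n) + 1) / (b + n) - 1 := Real.log_le_sub_one_of_pos (by positivity)
        _ = 1 / (b + n) := by field_simp; ring
    calc C - 1 / (b + n)
        ≤ (Real.log (b + n) - Real.log (a + ((n+1:ℕ):ℝ)))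
          + (((Real.log (a + ((n+1:ℕ):ℝ)) - Real.log a)
              - (Real.log (b + ((n+1:ℕ):ℝ)) - Real.log b))
            + (phiAux a - phiAux b)) := by
          rw [hC]; linarith
      _ ≤ (digamma (b + ((n+1:ℕ):ℝ)) - digamma (a + ((n+1:ℕ):ℝ)))
          + ∑ k ∈ Finset.range (n+1), ((1:ℝ)/(a + k) - 1/(b + k)) := by
          rw [sum_eq]; linarith
      _ = digamma b - digamma a := main.symm
  have h1 : Filter.Tendsto (fun n : ℕ => 1 / (b + (n:ℝ))) Filter.atTop (nhds 0) := by
    have h2 : Filter.Tendsto (fun n : ℕ => b + (n:ℝ)) Filter.atTop Filter.atTop :=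
      tendsto_atTop_add_const_left Filter.atTop b tendsto_natCast_atTop_atTop
    simpa [one_div, Function.comp_def] using (tendsto_inv_atTop_zero.comp h2)
  have hlim : Filter.Tendsto (fun n : ℕ => C - 1 / (b + (n:ℝ))) Filter.atTop (nhds C) := by
    simpa using (tendsto_const_nhds (x := C)).sub h1
  exact le_of_tendsto' hlim key

/-- For the binary EPN-UCE loss `ℓ(e,p) = ψ(e+2) − ψ((e+2)p)` with fixed
`p ∈ (0,1)`: `ℓ(e,p) > −ln p` for all `e ≥ 0`, and `ℓ(e,p) → −ln p` as
`e → ∞`. -/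
theorem epn_uce_loss_bound (p : ℝ) (hp0 : 0 < p) (hp1 : p < 1) :
    (∀ e : ℝ, 0 ≤ e → -Real.log p < digamma (e + 2) - digamma ((e + 2) * p)) ∧
    Filter.Tendsto (fun e : ℝ => digamma (e + 2) - digamma ((e + 2) * p))
      Filter.atTop (nhds (-Real.log p)) := by
  constructor
  · intro e he
    set x : ℝ := e + 2 with hx
    have hx0 : 0 < x := by positivity
    have ha : 0 < x * p := by positivity
    have hab : x * p < x := by nlinarith
    have h1 := key_lower ha hab
    have h2 : 0 < phiAux (x * p) - phiAux x := by
      have := phiAux_strictAnti (mem_Ioi.mpr ha) (mem_Ioi.mpr hx0) hab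
      linarith
    have h3 : Real.log x - Real.log (x * p) = -Real.log p := by
      rw [Real.log_mul hx0.ne' hp0.ne']
      ring
    linarith
  · have hlow : Filter.Tendsto (fun e : ℝ => Real.log (e + 1) - Real.log ((e + 2) * p))
        Filter.atTop (nhds (-Real.log p)) := by
      have h1 : Filter.Tendsto (fun e : ℝ => (e + 1) / (e + 2)) Filter.atTop (nhds 1) := by
        have h2 : Filter.Tendsto (fun e : ℝ => 1 - 1 / (e + 2)) Filter.atTop (nhds 1) := by
          have h5 := (tendsto_inv_atTop_zero (𝕜 := ℝ)).comp
            (tendsto_atTop_add_const_right Filter.atTop (2:ℝ) Filter.tendsto_id)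
          simpa [one_div] using (tendsto_const_nhds (x := (1:ℝ))).sub h5
        apply h2.congr'
        filter_upwards [Filter.eventually_gt_atTop (0:ℝ)] with e he
        field_simp
        ring
      have h3 : Filter.Tendsto (fun e : ℝ => Real.log ((e + 1) / (e + 2)))
          Filter.atTop (nhds 0) := by
        have := (Real.continuousAt_log (by norm_num : (1:ℝ) ≠ 0)).tendsto.comp h1
        simpa [Function.comp_def] using this
      have h4 : (fun e : ℝ => Real.log ((e + 1) / (e + 2)) - Real.log p)
          =ᶠ[Filter.atTop] fun e : ℝ => Real.log (e + 1) - Real.log ((e + 2) * p) := by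
        filter_upwards [Filter.eventually_gt_atTop (0:ℝ)] with e he
        rw [Real.log_div (by positivity) (by positivity),
          Real.log_mul (by positivity) hp0.ne']
        ring
      have h5 := h3.sub (tendsto_const_nhds (x := Real.log p))
      simpa using h5.congr' h4
    have hhigh : Filter.Tendsto (fun e : ℝ => Real.log (e + 2) - Real.log ((e + 2) * p - 1))
        Filter.atTop (nhds (-Real.log p)) := by
      have h1 : Filter.Tendsto (fun e : ℝ => p - 1 / (e + 2)) Filter.atTop (nhds p) := by
        have h5 := (tendsto_inv_atTop_zero (𝕜 := ℝ)).comp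
          (tendsto_atTop_add_const_right Filter.atTop (2:ℝ) Filter.tendsto_id)
        simpa [one_div] using (tendsto_const_nhds (x := p)).sub h5
      have h3 : Filter.Tendsto (fun e : ℝ => -Real.log (p - 1 / (e + 2)))
          Filter.atTop (nhds (-Real.log p)) :=
        ((Real.continuousAt_log hp0.ne').tendsto.comp h1).neg
      apply h3.congr'
      filter_upwards [Filter.eventually_ge_atTop (2 / p)] with e he
      have he2 : (0:ℝ) < e + 2 := by
        have : (0:ℝ) < 2 / p := by positivity
        linarith
      have hep : 2 ≤ e * p := (div_le_iff₀ hp0).mp he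
      have hpos : 0 < (e + 2) * p - 1 := by nlinarith
      have key : p - 1 / (e + 2) = ((e + 2) * p - 1) / (e + 2) := by
        field_simp
      rw [key, Real.log_div hpos.ne' he2.ne']
      ring
    apply tendsto_of_tendsto_of_tendsto_of_le_of_le' hlow hhigh
    · filter_upwards [Filter.eventually_gt_atTop (0:ℝ)] with e he
      have h1 : Real.log (e + 1) ≤ digamma (e + 2) := by
        have h := log_le_digamma (x := e + 1) (by linarith)
        have e1 : e + 1 + 1 = e + 2 := by ring
        rwa [e1] at h
      have h2 : digamma ((e + 2) * p) ≤ Real.log ((e + 2) * p) := digamma_le_log (by positivity)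
      linarith
    · filter_upwards [Filter.eventually_ge_atTop (2 / p)] with e he
      have he2 : (0:ℝ) < e + 2 := by
        have : (0:ℝ) < 2 / p := by positivity
        linarith
      have hep : 2 ≤ e * p := (div_le_iff₀ hp0).mp he
      have hpos : 0 < (e + 2) * p - 1 := by nlinarith
      have h1 : digamma (e + 2) ≤ Real.log (e + 2) := digamma_le_log (by linarith)
      have h2 : Real.log ((e + 2) * p - 1) ≤ digamma ((e + 2) * p) := by
        have h := log_le_digamma (x := (e + 2) * p - 1) hpos
        have e1 : (e + 2) * p - 1 + 1 = (e + 2) * p := by ring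
        rwa [e1] at h
      linarith
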